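/- If a, b are distinct elements of a root basis Π with m_{ab} ≠ ∞ (i.e. (a,b) = -cos(π/m_{ab}) for an integer m_{ab} ≥ 2), then for each integer i, (ρ_a ρ_b)^i a = (sin((2i+1)θ)/sin θ)·a + (sin(2iθ)/sin θ)·b where θ = π/m_{ab}, and in particular ρ_a ρ_b has order m_{ab}. -/

import Mathlib

open Real

variable {V : Type*} [AddCommGroup V] [Module ℝ V]

/-- The set of positive linear combinations of a set `A`. -/
def PLC (A : Set V) : Set V :=
  {v | ∃ (s : Finset V) (c : V → ℝ), (↑s : Set V) ⊆ A ∧ (∀ x ∈ s, 0 ≤ c x) ∧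
    (∃ x ∈ s, 0 < c x) ∧ v = ∑ x ∈ s, c x • x}

/-- A Coxeter datum (Krammer): a root basis `Pi` in `V` with bilinear form `B`. -/
structure CoxeterDatum (V : Type*) [AddCommGroup V] [Module ℝ V] where
  B : LinearMap.BilinForm ℝ V
  Pi : Set V
  norm_one : ∀ a ∈ Pi, B a a = 1
  symm : ∀ a ∈ Pi, ∀ b ∈ Pi, B a b = B b a
  offdiag : ∀ a ∈ Pi, ∀ b ∈ Pi, a ≠ b →
    (∃ m : ℕ, 2 ≤ m ∧ B a b = -Real.cos (Real.pi / m)) ∨ B a b ≤ -1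
  zero_not_plc : (0 : V) ∉ PLC Pi

namespace CoxeterDatum

variable (D : CoxeterDatum V)

/-- The reflection in the vector `a`, as a linear endomorphism of `V`. -/
noncomputable def refl (a : V) : Module.End ℝ V where
  toFun x := x - (2 * D.B x a) • a
  map_add' x y := by simp only [map_add, LinearMap.add_apply]; module
  map_smul' c x := by simp only [map_smul, LinearMap.smul_apply, smul_eq_mul,
    RingHom.id_apply]; module

/-- The set of simple reflections, as invertible endomorphisms of `V`. -/
def simples : Set (Module.End ℝ V)ˣ :=
  {u | ∃ a ∈ D.Pi, (u : Module.End ℝ V) = D.refl a}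

/-- The Coxeter group `W`, realized as the group generated by the simple reflections. -/
noncomputable def Wgrp : Subgroup (Module.End ℝ V)ˣ := Subgroup.closure D.simples

/-- The root system. -/
def roots : Set V :=
  {x | ∃ w ∈ D.Wgrp, ∃ a ∈ D.Pi, x = (w : Module.End ℝ V) a}

/-- The positive roots. -/
def posRoots : Set V := D.roots ∩ PLC D.Pi

/-- The negative roots. -/
def negRoots : Set V := {x | -x ∈ D.posRoots}

/-- The length of an element of `W` with respect to the simple reflections. -/
noncomputable def len (w : (Module.End ℝ V)ˣ) : ℕ :=
  sInf {n | ∃ l : List (Module.End ℝ V)ˣ,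
    l.length = n ∧ (∀ u ∈ l, u ∈ D.simples) ∧ l.prod = w}

/-- The depth of a root. -/
noncomputable def dp (x : V) : ℕ :=
  sInf {n | ∃ w ∈ D.Wgrp, D.len w = n ∧ (w : Module.End ℝ V) x ∈ D.negRoots}

/-- Dominance: `x` dominates `y` if every `w ∈ W` making `x` negative makes `y` negative. -/
def dom (x y : V) : Prop :=
  ∀ w ∈ D.Wgrp, (w : Module.End ℝ V) x ∈ D.negRoots → (w : Module.End ℝ V) y ∈ D.negRoots

/-- `D(x)`: the set of positive roots other than `x` dominated by `x`. -/
def DSet (x : V) : Set V := {y | y ∈ D.posRoots ∧ y ≠ x ∧ D.dom x y}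

/-- `D_n`: the set of positive roots dominating exactly `n` other positive roots. -/
def Dn (n : ℕ) : Set V :=
  {x | x ∈ D.posRoots ∧ (D.DSet x).Finite ∧ (D.DSet x).ncard = n}

/-- The set of reflections of `W`. -/
def TSet : Set (Module.End ℝ V)ˣ :=
  {t | ∃ w ∈ D.Wgrp, ∃ s ∈ D.simples, t = w * s * w⁻¹}

/-- `N(w)`: the set of positive roots sent to negative roots by `w`. -/
def NSet (w : (Module.End ℝ V)ˣ) : Set V :=
  {z | z ∈ D.posRoots ∧ (w : Module.End ℝ V) z ∈ D.negRoots}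

/-- `N̄(w)`: the reflections `t` with `ℓ(wt) < ℓ(w)`. -/
def Nbar (w : (Module.End ℝ V)ˣ) : Set (Module.End ℝ V)ˣ :=
  {t | t ∈ D.TSet ∧ D.len (w * t) < D.len w}

/-- The canonical generators of a reflection subgroup `W'`. -/
def canGens (W' : Subgroup (Module.End ℝ V)ˣ) : Set (Module.End ℝ V)ˣ :=
  {t | t ∈ D.TSet ∧ D.Nbar t ∩ (W' : Set (Module.End ℝ V)ˣ) = {t}}

/-- `S(x)`: elements of `W` of minimal length sending `x` into `Π` (inverse-wise). -/
def SSet (x : V) : Set (Module.End ℝ V)ˣ :=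
  {w | w ∈ D.Wgrp ∧ D.len w = D.dp x - 1 ∧ ((w⁻¹ : (Module.End ℝ V)ˣ) : Module.End ℝ V) x ∈ D.Pi}

end CoxeterDatum

/-! With `θ = π / m`, put `v_{a,b}(t) = (sin ((t + 1) θ) • a + sin (t θ) • b) / sin θ`
(`dihedralRoot a b θ t`). The identity `sin ((t + 2) θ) + sin (t θ) = 2 cos θ sin ((t + 1) θ)`
gives `ρ_b v_{a,b}(t) = v_{b,a}(t + 1)`, so `ρ_a ρ_b` shifts `t` by `2`; since `a = v(0)`
this is the formula for `(ρ_a ρ_b)^i a`. Shifting by `2m` fixes `a = v(0)` and `-b = v(-1)`,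
and `ρ_a ρ_b` fixes every vector orthogonal to `a` and `b`; as the Gram matrix of `a, b` has
determinant `sin² θ ≠ 0`, these span `V`, so `(ρ_a ρ_b)^m = 1`. Conversely,
`(ρ_a ρ_b)^k a = a` gives `cos (2kθ) = (v(2k), a) = (a, a) = 1`, i.e. `m ∣ k`. -/
lemma sin_pi_div_natCast_pos {m : ℕ} (hm : 2 ≤ m) : 0 < sin (π / m) := by
  have hm' : (2 : ℝ) ≤ m := by exact_mod_cast hm
  apply sin_pos_of_pos_of_lt_pi (by positivity)
  rw [div_lt_iff₀ (by linarith)]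
  nlinarith [pi_pos]

lemma dvd_of_cos_two_mul_pi_div_eq_one {m k : ℕ} (hm : m ≠ 0)
    (h : cos (2 * k * (π / m)) = 1) : m ∣ k := by
  obtain ⟨n, hn⟩ := (cos_eq_one_iff _).1 h
  have hnk : (n * m : ℤ) = k := by
    have : ((n * m : ℤ) : ℝ) = k := by
      push_cast
      field_simp at hn
      nlinarith [pi_pos]
    exact_mod_cast this
  exact Int.natCast_dvd_natCast.1 ⟨n, by rw [← hnk, mul_comm]⟩

lemma Units.zpow_apply_of_apply_eq_add {R M A : Type*} [Semiring R] [AddCommMonoid M]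
    [Module R M] [AddCommGroup A] (g : (Module.End R M)ˣ) (v : A → M) (d : A)
    (hg : ∀ t, (g : Module.End R M) (v t) = v (t + d)) (i : ℤ) (t : A) :
    ((g ^ i : (Module.End R M)ˣ) : Module.End R M) (v t) = v (t + i • d) := by
  induction i using Int.induction_on generalizing t with
  | zero => simp
  | succ i ih =>
    rw [zpow_add_one, Units.val_mul, Module.End.mul_apply, hg, ih, add_zsmul, one_zsmul]
    congr 1; abel
  | pred i ih =>
    have hinv : ((g⁻¹ : (Module.End R M)ˣ) : Module.End R M) (v t) = v (t - d) := by
      conv_lhs => rw [← sub_add_cancel t d, ← hg]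
      rw [← Module.End.mul_apply, ← Units.val_mul, inv_mul_cancel, Units.val_one,
        Module.End.one_apply]
    rw [zpow_sub_one, Units.val_mul, Module.End.mul_apply, hinv, ih, sub_zsmul, one_zsmul]
    congr 1; abel

noncomputable def dihedralRoot (a b : V) (θ t : ℝ) : V :=
  (sin ((t + 1) * θ) / sin θ) • a + (sin (t * θ) / sin θ) • b

section dihedralRoot

variable {a b : V} {θ : ℝ}

lemma dihedralRoot_zero (hs : sin θ ≠ 0) : dihedralRoot a b θ 0 = a := by
  simp [dihedralRoot, hs]

lemma dihedralRoot_neg_one (hs : sin θ ≠ 0) : dihedralRoot a b θ (-1) = -b := by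
  simp [dihedralRoot, hs]

lemma dihedralRoot_add_two_mul {m : ℕ} (hm : m ≠ 0) (t : ℝ) :
    dihedralRoot a b (π / m) (t + 2 * m) = dihedralRoot a b (π / m) t := by
  have hshift (s : ℝ) : (s + 2 * m) * (π / m) = s * (π / m) + 2 * π := by
    field_simp
  rw [dihedralRoot, dihedralRoot, add_right_comm, hshift, hshift, sin_add_two_pi, sin_add_two_pi]

end dihedralRoot

namespace CoxeterDatum

variable (D : CoxeterDatum V) {a b : V} {θ : ℝ}

lemma refl_apply (a x : V) : D.refl a x = x - (2 * D.B x a) • a := rfl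

lemma refl_apply_of_B_eq_zero {x : V} (h : D.B x a = 0) : D.refl a x = x := by
  simp [refl_apply, h]

lemma refl_dihedralRoot (hbb : D.B b b = 1) (hab : D.B a b = -cos θ) (t : ℝ) :
    D.refl b (dihedralRoot a b θ t) = dihedralRoot b a θ (t + 1) := by
  have hsin : sin ((t + 1 + 1) * θ) = 2 * sin ((t + 1) * θ) * cos θ - sin (t * θ) := by
    rw [two_mul_sin_mul_cos]
    ring_nf
  simp only [refl_apply, dihedralRoot, map_add, map_smul, hbb, hab, hsin]
  module

lemma refl_mul_refl_dihedralRoot (haa : D.B a a = 1) (hbb : D.B b b = 1)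
    (hab : D.B a b = -cos θ) (hba : D.B b a = -cos θ) (t : ℝ) :
    (D.refl a * D.refl b) (dihedralRoot a b θ t) = dihedralRoot a b θ (t + 2) := by
  rw [Module.End.mul_apply, D.refl_dihedralRoot hbb hab, D.refl_dihedralRoot haa hba]
  ring_nf

lemma B_dihedralRoot_left (haa : D.B a a = 1) (hba : D.B b a = -cos θ) (hs : sin θ ≠ 0)
    (t : ℝ) : D.B (dihedralRoot a b θ t) a = cos (t * θ) := by
  simp only [dihedralRoot, map_add, map_smul, LinearMap.add_apply, LinearMap.smul_apply,
    smul_eq_mul, haa, hba, add_mul, one_mul, sin_add]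
  field_simp
  ring

lemma exists_B_sub_eq_zero (haa : D.B a a = 1) (hbb : D.B b b = 1)
    (hab : D.B a b = -cos θ) (hba : D.B b a = -cos θ) (hs : sin θ ≠ 0) (x : V) :
    ∃ α β : ℝ, D.B (x - α • a - β • b) a = 0 ∧ D.B (x - α • a - β • b) b = 0 := by
  refine ⟨(D.B x a + cos θ * D.B x b) / sin θ ^ 2, (D.B x b + cos θ * D.B x a) / sin θ ^ 2,
    ?_, ?_⟩ <;>
  simp only [map_sub, map_smul, LinearMap.sub_apply, LinearMap.smul_apply, smul_eq_mul,
    haa, hbb, hab, hba] <;>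
  field_simp
  · linear_combination D.B x a * sin_sq_add_cos_sq θ
  · linear_combination D.B x b * sin_sq_add_cos_sq θ

lemma eq_one_of_apply_eq_self (haa : D.B a a = 1) (hbb : D.B b b = 1)
    (hab : D.B a b = -cos θ) (hba : D.B b a = -cos θ) (hs : sin θ ≠ 0) {T : Module.End ℝ V}
    (hTa : T a = a) (hTb : T b = b) (hT : ∀ u, D.B u a = 0 → D.B u b = 0 → T u = u) :
    T = 1 := by
  ext x
  obtain ⟨α, β, hua, hub⟩ := D.exists_B_sub_eq_zero haa hbb hab hba hs x
  have hx : x = α • a + β • b + (x - α • a - β • b) := by abel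
  conv_lhs => rw [hx]
  rw [map_add, map_add, map_smul, map_smul, hTa, hTb, hT _ hua hub, Module.End.one_apply]
  abel

variable {g : (Module.End ℝ V)ˣ}

lemma zpow_apply_dihedralRoot (hg : (g : Module.End ℝ V) = D.refl a * D.refl b)
    (haa : D.B a a = 1) (hbb : D.B b b = 1) (hab : D.B a b = -cos θ) (hba : D.B b a = -cos θ)
    (i : ℤ) (t : ℝ) :
    ((g ^ i : (Module.End ℝ V)ˣ) : Module.End ℝ V) (dihedralRoot a b θ t) =
      dihedralRoot a b θ (t + 2 * i) := by
  rw [Units.zpow_apply_of_apply_eq_add g _ 2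
    (fun t => hg ▸ D.refl_mul_refl_dihedralRoot haa hbb hab hba t), zsmul_eq_mul, mul_comm]

lemma pow_apply_dihedralRoot (hg : (g : Module.End ℝ V) = D.refl a * D.refl b)
    (haa : D.B a a = 1) (hbb : D.B b b = 1) (hab : D.B a b = -cos θ) (hba : D.B b a = -cos θ)
    (k : ℕ) (t : ℝ) :
    ((g ^ k : (Module.End ℝ V)ˣ) : Module.End ℝ V) (dihedralRoot a b θ t) =
      dihedralRoot a b θ (t + 2 * k) := by
  simpa using D.zpow_apply_dihedralRoot hg haa hbb hab hba k t

variable {m : ℕ}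

lemma pow_eq_one (hg : (g : Module.End ℝ V) = D.refl a * D.refl b) (hm : 2 ≤ m)
    (haa : D.B a a = 1) (hbb : D.B b b = 1) (hab : D.B a b = -cos (π / m))
    (hba : D.B b a = -cos (π / m)) : g ^ m = 1 := by
  have hs := (sin_pi_div_natCast_pos hm).ne'
  have hperiod (t : ℝ) := D.pow_apply_dihedralRoot hg haa hbb hab hba m t
  have hfixa := hperiod 0
  rw [dihedralRoot_add_two_mul (by omega), dihedralRoot_zero hs] at hfixa
  have hfixb := hperiod (-1)
  rw [dihedralRoot_add_two_mul (by omega), dihedralRoot_neg_one hs, map_neg, neg_inj] at hfixb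
  refine Units.ext (D.eq_one_of_apply_eq_self haa hbb hab hba hs hfixa hfixb fun u hua hub => ?_)
  have hgu : (g : Module.End ℝ V) u = u := by
    rw [hg, Module.End.mul_apply, D.refl_apply_of_B_eq_zero hub, D.refl_apply_of_B_eq_zero hua]
  rw [Units.val_pow_eq_pow_val, Module.End.pow_apply, Function.iterate_fixed hgu]

lemma dvd_of_pow_eq_one (hg : (g : Module.End ℝ V) = D.refl a * D.refl b) (hm : 2 ≤ m)
    (haa : D.B a a = 1) (hbb : D.B b b = 1) (hab : D.B a b = -cos (π / m))
    (hba : D.B b a = -cos (π / m)) {k : ℕ} (hk : g ^ k = 1) : m ∣ k := by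
  have hs := (sin_pi_div_natCast_pos hm).ne'
  have hfix := D.pow_apply_dihedralRoot hg haa hbb hab hba k 0
  rw [hk, Units.val_one, Module.End.one_apply, zero_add] at hfix
  have hcos := congrArg (D.B · a) hfix
  simp only [D.B_dihedralRoot_left haa hba hs, zero_mul, cos_zero] at hcos
  exact dvd_of_cos_two_mul_pi_div_eq_one (by omega) hcos.symm

lemma orderOf_eq (hg : (g : Module.End ℝ V) = D.refl a * D.refl b) (hm : 2 ≤ m)
    (haa : D.B a a = 1) (hbb : D.B b b = 1) (hab : D.B a b = -cos (π / m))
    (hba : D.B b a = -cos (π / m)) : orderOf g = m :=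
  Nat.dvd_antisymm (orderOf_dvd_of_pow_eq_one (D.pow_eq_one hg hm haa hbb hab hba))
    (D.dvd_of_pow_eq_one hg hm haa hbb hab hba (pow_orderOf_eq_one g))

end CoxeterDatum

theorem rank_two_finite_order_general (D : CoxeterDatum V) {a b : V} (ha : a ∈ D.Pi) (hb : b ∈ D.Pi)
    (m : ℕ) (hm : 2 ≤ m) (hB : D.B a b = -Real.cos (Real.pi / m))
    (ua ub : (Module.End ℝ V)ˣ)
    (hua : (ua : Module.End ℝ V) = D.refl a) (hub : (ub : Module.End ℝ V) = D.refl b) :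
    (∀ i : ℤ, (((ua * ub) ^ i : (Module.End ℝ V)ˣ) : Module.End ℝ V) a =
      (Real.sin (((2 * i + 1 : ℤ) : ℝ) * (Real.pi / m)) / Real.sin (Real.pi / m)) • a +
      (Real.sin (((2 * i : ℤ) : ℝ) * (Real.pi / m)) / Real.sin (Real.pi / m)) • b) ∧
    orderOf (ua * ub) = m := by
  have hg : ((ua * ub : (Module.End ℝ V)ˣ) : Module.End ℝ V) = D.refl a * D.refl b := by
    rw [Units.val_mul, hua, hub]
  have haa := D.norm_one a ha
  have hbb := D.norm_one b hb
  have hba : D.B b a = -cos (π / m) := D.symm a ha b hb ▸ hB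
  refine ⟨fun i => ?_, D.orderOf_eq hg hm haa hbb hB hba⟩
  have hroot := D.zpow_apply_dihedralRoot hg haa hbb hB hba i 0
  rw [dihedralRoot_zero (sin_pi_div_natCast_pos hm).ne'] at hroot
  rw [hroot, dihedralRoot]
  push_cast
  ring_nf

/-- Proposition 1.2(i). -/
theorem rank_two_finite_order (D : CoxeterDatum V) {a b : V} (ha : a ∈ D.Pi) (hb : b ∈ D.Pi)
    (hab : a ≠ b) (m : ℕ) (hm : 2 ≤ m) (hB : D.B a b = -Real.cos (Real.pi / m))
    (ua ub : (Module.End ℝ V)ˣ)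
    (hua : (ua : Module.End ℝ V) = D.refl a) (hub : (ub : Module.End ℝ V) = D.refl b) :
    (∀ i : ℤ, (((ua * ub) ^ i : (Module.End ℝ V)ˣ) : Module.End ℝ V) a =
      (Real.sin (((2 * i + 1 : ℤ) : ℝ) * (Real.pi / m)) / Real.sin (Real.pi / m)) • a +
      (Real.sin (((2 * i : ℤ) : ℝ) * (Real.pi / m)) / Real.sin (Real.pi / m)) • b) ∧
    orderOf (ua * ub) = m :=
  rank_two_finite_order_general D ha hb m hm hB ua ub hua hub
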